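/- In B_3, for p, q ≥ 1 the word a2^{-p} α σ2^{-p_1} σ1^{q_1} ⋯ σ2^{-p_k} σ1^{q_k} α⁻¹ a1^{q} equals a2^{-p+1} σ1 σ2^{-p_1} σ1^{q_1} ⋯ σ2^{-p_k} σ1^{q_k - 1} σ2⁻¹ a1^{q}, where α = σ2 σ1. -/

import Mathlib

/-- The braid relation for the braid group on 3 strands. -/
def braidRels : Set (FreeGroup (Fin 2)) :=
  {FreeGroup.of 0 * FreeGroup.of 1 * FreeGroup.of 0 *
    (FreeGroup.of 1 * FreeGroup.of 0 * FreeGroup.of 1)⁻¹}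

/-- The braid group `B₃ = ⟨σ1, σ2 | σ1 σ2 σ1 = σ2 σ1 σ2⟩`. -/
abbrev B3 := PresentedGroup braidRels

def σ1 : B3 := PresentedGroup.of 0
def σ2 : B3 := PresentedGroup.of 1
def a1 : B3 := σ1
def a2 : B3 := σ2
def a3 : B3 := σ2 * σ1 * σ2⁻¹
def α : B3 := a2 * a1

theorem prod_ofFn_mul_zpow_pred_last {G : Type*} [Group G] {k : ℕ} (hk : 1 ≤ k)
    (x : Fin k → G) (y : G) (n : Fin k → ℤ) :
    (List.ofFn fun i : Fin k => x i * y ^ (if i.val = k - 1 then n i - 1 else n i)).prod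
      = (List.ofFn fun i : Fin k => x i * y ^ n i).prod * y⁻¹ := by
  obtain ⟨m, rfl⟩ : ∃ m, k = m + 1 := ⟨k - 1, by omega⟩
  rw [List.ofFn_succ', List.ofFn_succ']
  simp [Fin.val_castSucc, zpow_sub_one, mul_assoc, Nat.ne_of_lt]

theorem conjugate_alternating_word_general (p q k : ℕ) (hk : 1 ≤ k)
    (ps qs : Fin k → ℕ) :
    a2 ^ (-(p : ℤ)) * α *
        (List.ofFn fun i : Fin k => σ2 ^ (-(ps i : ℤ)) * σ1 ^ (qs i : ℤ)).prod *
        α⁻¹ * a1 ^ (q : ℤ)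
      = a2 ^ (-(p : ℤ) + 1) * σ1 *
          (List.ofFn fun i : Fin k =>
            σ2 ^ (-(ps i : ℤ)) *
              σ1 ^ (if i.val = k - 1 then (qs i : ℤ) - 1 else (qs i : ℤ))).prod *
          σ2⁻¹ * a1 ^ (q : ℤ) := by
  rw [prod_ofFn_mul_zpow_pred_last hk]
  -- Both sides are equal already as free-group words, without the braid relation.
  simp only [α, a1, a2]
  group

/-- In `B₃`, for `p, q ≥ 1` and positive integers `pᵢ, qᵢ`,
`a2^{-p} α (σ2^{-p₁} σ1^{q₁} ⋯ σ2^{-pₖ} σ1^{qₖ}) α⁻¹ a1^{q}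
  = a2^{-p+1} σ1 (σ2^{-p₁} σ1^{q₁} ⋯ σ2^{-pₖ} σ1^{qₖ - 1}) σ2⁻¹ a1^{q}`. -/
theorem conjugate_alternating_word (p q k : ℕ) (hp : 1 ≤ p) (hq : 1 ≤ q) (hk : 1 ≤ k)
    (ps qs : Fin k → ℕ) (hps : ∀ i, 1 ≤ ps i) (hqs : ∀ i, 1 ≤ qs i) :
    a2 ^ (-(p : ℤ)) * α *
        (List.ofFn fun i : Fin k => σ2 ^ (-(ps i : ℤ)) * σ1 ^ (qs i : ℤ)).prod *
        α⁻¹ * a1 ^ (q : ℤ)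
      = a2 ^ (-(p : ℤ) + 1) * σ1 *
          (List.ofFn fun i : Fin k =>
            σ2 ^ (-(ps i : ℤ)) *
              σ1 ^ (if i.val = k - 1 then (qs i : ℤ) - 1 else (qs i : ℤ))).prod *
          σ2⁻¹ * a1 ^ (q : ℤ) :=
  conjugate_alternating_word_general p q k hk ps qs
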